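/- arXiv:math/0103103 — 3 statements merged into one kernel-verified Lean document; each statement's English description precedes it below -/
import Mathlib

section
/- Let A be an algebra with product μ and N a Nijenhuis tensor for μ, i.e., T_N μ(X,Y) = μ(NX,NY) − N(μ(NX,Y) + μ(X,NY) − N(μ(X,Y))) = 0 for all X,Y. Then for every k ≥ 1, N^k is also a Nijenhuis tensor for μ, i.e., T_{N^k} μ = 0. -/
section aux

variable {K : Type*} [Field K] {A : Type*} [AddCommGroup A] [Module K A]
variable (μ : A →ₗ[K] A →ₗ[K] A) (N : Module.End K A)

lemma nij_pow_comm (k : ℕ) (z : A) : N ((N ^ k) z) = (N ^ k) (N z) := by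
  rw [← Module.End.mul_apply, ← pow_succ', pow_succ, Module.End.mul_apply]

lemma nij_lemA
    (hN' : ∀ X Y : A, μ (N X) (N Y)
      = N (μ (N X) Y) + N (μ X (N Y)) - N (N (μ X Y))) :
    ∀ (m : ℕ) (X Y : A), μ (N X) ((N ^ m) Y)
      = N (μ X ((N ^ m) Y)) + (N ^ m) (μ (N X) Y) - (N ^ m) (N (μ X Y)) := by
  intro m
  induction m with
  | zero => intro X Y; simp
  | succ m ih =>
      intro X Y
      have h2 : ∀ z : A, (N ^ (m + 1)) z = N ((N ^ m) z) := by
        intro z; rw [pow_succ']; rfl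
      rw [h2 Y, hN' X ((N ^ m) Y), ih X Y]
      simp only [map_add, map_sub, h2]
      abel

lemma nij_lemB
    (hN' : ∀ X Y : A, μ (N X) (N Y)
      = N (μ (N X) Y) + N (μ X (N Y)) - N (N (μ X Y))) :
    ∀ (m : ℕ) (X Y : A), μ ((N ^ m) X) (N Y)
      = N (μ ((N ^ m) X) Y) + (N ^ m) (μ X (N Y)) - (N ^ m) (N (μ X Y)) := by
  intro m
  induction m with
  | zero => intro X Y; simp
  | succ m ih =>
      intro X Y
      have h2 : ∀ z : A, (N ^ (m + 1)) z = N ((N ^ m) z) := by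
        intro z; rw [pow_succ']; rfl
      rw [h2 X, hN' ((N ^ m) X) Y, ih X Y]
      simp only [map_add, map_sub, h2]
      abel

lemma nij_main
    (hN' : ∀ X Y : A, μ (N X) (N Y)
      = N (μ (N X) Y) + N (μ X (N Y)) - N (N (μ X Y))) :
    ∀ (k : ℕ) (X Y : A), μ ((N ^ k) X) ((N ^ k) Y)
      = (N ^ k) (μ ((N ^ k) X) Y) + (N ^ k) (μ X ((N ^ k) Y))
        - (N ^ k) ((N ^ k) (μ X Y)) := by
  intro k
  induction k with
  | zero => intro X Y; simp
  | succ k ih =>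
      intro X Y
      have h2 : ∀ z : A, (N ^ (k + 1)) z = (N ^ k) (N z) := by
        intro z; rw [pow_succ]; rfl
      rw [h2 X, h2 Y, ih (N X) (N Y),
        show μ ((N ^ k) (N X)) (N Y) = μ ((N ^ (k+1)) X) (N Y) from by rw [h2],
        show μ (N X) ((N ^ k) (N Y)) = μ (N X) ((N ^ (k+1)) Y) from by rw [h2],
        nij_lemB μ N hN' (k+1) X Y, nij_lemA μ N hN' (k+1) X Y, hN' X Y]
      simp only [map_add, map_sub, h2, nij_pow_comm]
      abel

end aux

/-- If `N` is a Nijenhuis tensor for `μ` (i.e. `T_N μ = 0`), then so is every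
power `N^k`, `k ≥ 1`. -/
theorem pow_nijenhuis {K : Type*} [Field K] {A : Type*} [AddCommGroup A] [Module K A]
    (μ : A →ₗ[K] A →ₗ[K] A) (N : Module.End K A)
    (hN : ∀ X Y : A, μ (N X) (N Y) - N (μ (N X) Y + μ X (N Y) - N (μ X Y)) = 0) :
    ∀ k : ℕ, 1 ≤ k → ∀ X Y : A,
      μ ((N ^ k) X) ((N ^ k) Y)
        - (N ^ k) (μ ((N ^ k) X) Y + μ X ((N ^ k) Y) - (N ^ k) (μ X Y)) = 0 := by
  have hN' : ∀ X Y : A, μ (N X) (N Y)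
      = N (μ (N X) Y) + N (μ X (N Y)) - N (N (μ X Y)) := by
    intro X Y
    have := hN X Y
    rw [sub_eq_zero] at this
    rw [this]
    simp only [map_add, map_sub]
  intro k _ X Y
  rw [sub_eq_zero]
  simp only [map_add, map_sub]
  exact nij_main μ N hN' k X Y
end

section
/- Let P : T*M → TM be the bundle map of a Poisson tensor P on a smooth manifold M, with associated Lie algebroid bracket [α,β]^P = L_{P(α)}β − L_{P(β)}α − d⟨P, α∧β⟩ on 1-forms. If N : T*M → T*M is a Nijenhuis tensor for this bracket (T_N[·,·]^P = 0) and P∘N = ᵗN∘P, then the Nijenhuis torsion of ᵗN : TM → TM with respect to the Lie bracket of vector fields vanishes on all pairs of vector fields in the image of P: T_{ᵗN}(P(α), P(β)) = 0 for all 1-forms α, β. -/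
/-- Abstract formulation for the Lie algebroid `(T*M, [·,·]^P)` of a Poisson
manifold: `A` is the space of 1-forms with the Koszul bracket `m = [·,·]^P`,
`L` is the Lie algebra of vector fields, and `P : A → L` is the anchor, so
that `P(m α β) = [P α, P β]`.  If `N : A → A` has vanishing Nijenhuis torsion
for `m` and `P ∘ N = ᵗN ∘ P`, then the Nijenhuis torsion of `ᵗN : L → L`
(w.r.t. the Lie bracket of vector fields) vanishes on pairs of vector fields
in the image of `P`: `T_{ᵗN}(P α, P β) = 0`. -/
theorem torsion_vanishes_on_image_of_anchor
    {A : Type*} [AddCommGroup A] [Module ℝ A]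
    {L : Type*} [LieRing L] [LieAlgebra ℝ L]
    (m : A →ₗ[ℝ] A →ₗ[ℝ] A)                              -- the bracket [·,·]^P on 1-forms
    (P : A →ₗ[ℝ] L)                                       -- the anchor (the Poisson tensor)
    (hanchor : ∀ α β : A, P (m α β) = ⁅P α, P β⁆)
    (halt : ∀ α : A, m α α = 0)
    (hjac : ∀ α β γ : A, m α (m β γ) + m β (m γ α) + m γ (m α β) = 0)
    (N : A →ₗ[ℝ] A) (tN : L →ₗ[ℝ] L)
    (hPN : ∀ α : A, P (N α) = tN (P α))                   -- P∘N = ᵗN∘P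
    (hNij : ∀ α β : A,
      m (N α) (N β) - N (m (N α) β + m α (N β) - N (m α β)) = 0) :
    ∀ α β : A,
      ⁅tN (P α), tN (P β)⁆
        - tN (⁅tN (P α), P β⁆ + ⁅P α, tN (P β)⁆ - tN ⁅P α, P β⁆) = 0 := by
  intro α β
  have h := congrArg P (hNij α β)
  simpa [map_sub, map_add, hanchor, hPN] using h
end

section
/- Let A be a finite-dimensional Lie algebra with bracket μ and N ∈ End(A), with Riesz decomposition A = A¹ ⊕ A² (N invertible on A¹, nilpotent on A²). Using the commuting operators A_N, B_N, C_N on bilinear maps and denoting by μ₂ = π₂∘μ the A²-component of the bracket, Gilmore's conditions (A_N^{p+s} − A_N^p C_N^s)μ₂ = (A_N^s B_N^p − B_N^p C_N^s)μ₂ hold for all p,s ≥ 1 if and only if π₂(T_N μ) = 0, where T_N μ = (A_N − B_N)(A_N − C_N)μ is the Nijenhuis torsion. -/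
private def Egil {K : Type*} [Field K] {g : Type*} [LieRing g] [LieAlgebra K g]
    (N : Module.End K g) (p s : ℕ) (X Y : g) : g :=
  ⁅(N ^ p) X, (N ^ s) Y⁆ - (N ^ s) ⁅(N ^ p) X, Y⁆ - (N ^ p) ⁅X, (N ^ s) Y⁆
    + (N ^ (p + s)) ⁅X, Y⁆

private lemma abel_helper₁ {M : Type*} [AddCommGroup M] {a b c d : M}
    (h : a - b - c + d = 0) : d - c = b - a := by
  rw [show d - c = (a - b - c + d) + (b - a) by abel, h, zero_add]

private lemma abel_helper₂ {M : Type*} [AddCommGroup M] {a b c d : M}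
    (h : d - c = b - a) : a - b - c + d = 0 := by
  rw [show a - b - c + d = (d - c) - (b - a) by abel, h, sub_self]

/-- Gilmore's conditions for the existence of the Saletan contraction of a
finite-dimensional Lie algebra: with `π₂` the projection onto the nilpotent
part of the Riesz decomposition (commuting with `N`), the conditions
`(A_N^{p+s} − A_N^p C_N^s)μ₂ = (A_N^s B_N^p − B_N^p C_N^s)μ₂` for all
`p, s ≥ 1` hold if and only if `π₂(T_N μ) = 0`. -/
theorem gilmore_conditions
    {K : Type*} [Field K] {g : Type*} [LieRing g] [LieAlgebra K g]
    [FiniteDimensional K g]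
    (N π₂ : Module.End K g)
    (hproj : π₂ ∘ₗ π₂ = π₂)
    (hcomm : N ∘ₗ π₂ = π₂ ∘ₗ N) :
    (∀ p s : ℕ, 1 ≤ p → 1 ≤ s → ∀ X Y : g,
      (N ^ (p + s)) (π₂ ⁅X, Y⁆) - (N ^ p) (π₂ ⁅X, (N ^ s) Y⁆)
        = (N ^ s) (π₂ ⁅(N ^ p) X, Y⁆) - π₂ ⁅(N ^ p) X, (N ^ s) Y⁆)
    ↔ (∀ X Y : g, π₂ (⁅N X, N Y⁆ - N (⁅N X, Y⁆ + ⁅X, N Y⁆ - N ⁅X, Y⁆)) = 0) := by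
  have hpow : ∀ (k : ℕ) (x : g), (N ^ (k + 1)) x = (N ^ k) (N x) := by
    intro k x; rw [pow_succ]; rfl
  have hpow' : ∀ (k : ℕ) (x : g), (N ^ (k + 1)) x = N ((N ^ k) x) := by
    intro k x; rw [pow_succ']; rfl
  have hswap : ∀ (k : ℕ) (x : g), N ((N ^ k) x) = (N ^ k) (N x) := by
    intro k x; rw [← hpow', hpow]
  have hc1 : ∀ x : g, π₂ (N x) = N (π₂ x) := by
    intro x; exact (LinearMap.congr_fun hcomm x).symm
  have hc : ∀ (k : ℕ) (x : g), π₂ ((N ^ k) x) = (N ^ k) (π₂ x) := by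
    intro k
    induction k with
    | zero => simp
    | succ n ih => intro x; rw [hpow, ih, hc1, ← hpow]
  have hE11 : ∀ X Y : g, Egil N 1 1 X Y
      = ⁅N X, N Y⁆ - N (⁅N X, Y⁆ + ⁅X, N Y⁆ - N ⁅X, Y⁆) := by
    intro X Y
    simp only [Egil, pow_one, map_add, map_sub, hpow' 1]
    abel
  have hEL : ∀ (p s : ℕ) (X Y : g),
      Egil N (p + 1) s X Y = Egil N p s (N X) Y + (N ^ p) (Egil N 1 s X Y) := by
    intro p s X Y
    simp only [Egil, pow_add, pow_succ, pow_zero, pow_one, Module.End.mul_apply,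
      Module.End.one_apply, map_add, map_sub, hswap]
    abel
  have hER : ∀ (s : ℕ) (X Y : g),
      Egil N 1 (s + 1) X Y = Egil N 1 s X (N Y) + (N ^ s) (Egil N 1 1 X Y) := by
    intro s X Y
    simp only [Egil, pow_add, pow_succ, pow_zero, pow_one, Module.End.mul_apply,
      Module.End.one_apply, map_add, map_sub, hswap]
    abel
  constructor
  · intro h X Y
    have key := h 1 1 le_rfl le_rfl X Y
    rw [← hE11 X Y]
    simp only [pow_one] at key
    simp only [Egil, pow_one, map_add, map_sub, hc, hc1]
    exact abel_helper₂ key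
  · intro h
    have hT : ∀ X Y : g, π₂ (Egil N 1 1 X Y) = 0 := by
      intro X Y; rw [hE11]; exact h X Y
    have h1s : ∀ (s : ℕ) (X Y : g), π₂ (Egil N 1 s X Y) = 0 := by
      intro s
      induction s with
      | zero => intro X Y; simp [Egil]
      | succ n ih =>
        intro X Y
        rw [hER, map_add, ih, hc, hT, map_zero, add_zero]
    have hps : ∀ (p s : ℕ) (X Y : g), π₂ (Egil N p s X Y) = 0 := by
      intro p
      induction p with
      | zero => intro s X Y; simp [Egil]
      | succ n ih =>
        intro s X Y
        rw [hEL, map_add, ih, hc, h1s, map_zero, add_zero]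
    intro p s _ _ X Y
    have h0 := hps p s X Y
    simp only [Egil, map_add, map_sub, hc] at h0
    exact abel_helper₁ h0
end
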